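/- Let f ∈ F[x_1,...,x_n] be an s-sparse polynomial with individual degree at most d, not divisible by any variable. Then the number of divisors of f (up to associates) that are not divisible by any monomial is at most s^d. -/

import Mathlib

/-!
A monomial-free divisor of `f` is determined, up to a unit, by the sub-multiset of the
monomial-free irreducible factors of `f` that it contains, so it suffices to show `2 ^ k ≤ s ^ d`
whenever `k` nonunit monomial-free polynomials have a product dividing `f`. Pick a variable `x_j`
occurring in one of them. Comparing degrees in `x_j`, at most `d` of the factors involve `x_j`.
The others divide every coefficient of `f` viewed as a polynomial in `x_j`. A factor that involves
`x_j` without being divisible by it forces the lowest and the highest of these coefficients to be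
distinct, so one of them has at most `s / 2` monomials, and induction on `s` bounds the number
`k'` of factors free of `x_j` by `2 ^ k' ≤ (s / 2) ^ d`.
-/

open MvPolynomial Finset UniqueFactorizationMonoid

namespace Polynomial

variable {A : Type*} [CommSemiring A] [NoZeroDivisors A]

theorem natTrailingDegree_lt_natDegree_of_dvd {p q : A[X]} (hpq : p ∣ q) (hq : q ≠ 0)
    (hpX : ¬X ∣ p) (hp : 0 < p.natDegree) : q.natTrailingDegree < q.natDegree := by
  obtain ⟨r, rfl⟩ := hpq
  have hp0 : p ≠ 0 := left_ne_zero_of_mul hq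
  have hr0 : r ≠ 0 := right_ne_zero_of_mul hq
  have hpt : p.natTrailingDegree = 0 :=
    natTrailingDegree_eq_zero.mpr (Or.inr (mt X_dvd_iff.mpr hpX))
  rw [natTrailingDegree_mul hp0 hr0, natDegree_mul hp0 hr0, hpt]
  have := natTrailingDegree_le_natDegree r
  omega

theorem card_le_natDegree_of_prod_dvd {M : Multiset A[X]} {q : A[X]}
    (hM : ∀ p ∈ M, 0 < p.natDegree) (hMq : M.prod ∣ q) (hq : q ≠ 0) :
    Multiset.card M ≤ q.natDegree := by
  have hM0 : (0 : A[X]) ∉ M := fun h => by simpa using hM 0 h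
  calc Multiset.card M ≤ (M.map natDegree).sum := by
        simpa using Multiset.card_nsmul_le_sum (s := M.map natDegree) (a := 1)
          (by simpa [Nat.one_le_iff_ne_zero, Nat.pos_iff_ne_zero] using hM)
  _ = M.prod.natDegree := (natDegree_multiset_prod M hM0).symm
  _ ≤ q.natDegree := natDegree_le_of_dvd hMq hq

end Polynomial

namespace MvPolynomial

section PolynomialEquivAt

variable {R σ : Type*} [CommSemiring R]

theorem card_support_coeff_optionEquivLeft_add_le (p : MvPolynomial (Option σ) R) {k l : ℕ}
    (hkl : k ≠ l) :
    #((optionEquivLeft R σ p).coeff k).support + #((optionEquivLeft R σ p).coeff l).support ≤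
      #p.support := by
  classical
  have hinj (k : ℕ) : Function.Injective (Finsupp.optionElim k : (σ →₀ ℕ) → _) :=
    fun m m' h => Finsupp.ext fun x => by simpa using DFunLike.congr_fun h (some x)
  rw [← card_image_of_injective _ (hinj k), ← card_image_of_injective _ (hinj l),
    ← card_union_of_disjoint]
  · refine card_le_card (union_subset ?_ ?_) <;>
      simp only [subset_iff, mem_image, mem_support_coeff_optionEquivLeft] <;>
      rintro _ ⟨m, hm, rfl⟩ <;> exact hm
  · simp only [disjoint_left, mem_image]
    rintro _ ⟨m, -, rfl⟩ ⟨m', -, h⟩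
    exact hkl (by simpa using (DFunLike.congr_fun h none).symm)

theorem degreeOf_coeff_optionEquivLeft_le (p : MvPolynomial (Option σ) R) (i : σ) (k : ℕ) :
    degreeOf i ((optionEquivLeft R σ p).coeff k) ≤ degreeOf (some i) p := by
  refine degreeOf_le_iff.mpr fun m hm => ?_
  simpa using monomial_le_degreeOf (some i) ((mem_support_coeff_optionEquivLeft R).mp hm)

variable [DecidableEq σ]

variable (R) in
noncomputable def polynomialEquivAt (j : σ) :
    MvPolynomial σ R ≃ₐ[R] Polynomial (MvPolynomial {i // i ≠ j} R) :=
  (renameEquiv R (Equiv.optionSubtypeNe j).symm).trans (optionEquivLeft R _)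

variable (j : σ)

theorem natDegree_polynomialEquivAt (p : MvPolynomial σ R) :
    (polynomialEquivAt R j p).natDegree = degreeOf j p :=
  (degreeOf_eq_natDegree j p).symm

theorem polynomialEquivAt_X_self :
    polynomialEquivAt R j (X j : MvPolynomial σ R) = Polynomial.X := by
  simp [polynomialEquivAt]

theorem polynomialEquivAt_X_val (i : {i // i ≠ j}) :
    polynomialEquivAt R j (X i : MvPolynomial σ R) = Polynomial.C (X i) := by
  simp [polynomialEquivAt, Equiv.optionSubtypeNe_symm_of_ne i.2]

theorem degreeOf_coeff_polynomialEquivAt_le (p : MvPolynomial σ R) (i : {i // i ≠ j}) (k : ℕ) :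
    degreeOf i ((polynomialEquivAt R j p).coeff k) ≤ degreeOf (i : σ) p := by
  refine (degreeOf_coeff_optionEquivLeft_le _ i k).trans_eq ?_
  rw [← Equiv.optionSubtypeNe_symm_of_ne i.2]
  exact degreeOf_rename_of_injective (Equiv.injective _) _

theorem card_support_coeff_polynomialEquivAt_add_le (p : MvPolynomial σ R) {k l : ℕ}
    (hkl : k ≠ l) :
    #((polynomialEquivAt R j p).coeff k).support + #((polynomialEquivAt R j p).coeff l).support ≤
      #p.support := by
  refine (card_support_coeff_optionEquivLeft_add_le _ hkl).trans_eq ?_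
  change #(rename (Equiv.optionSubtypeNe j).symm p).support = _
  rw [support_rename_of_injective (Equiv.injective _),
    card_image_of_injective _ (Finsupp.mapDomain_injective (Equiv.injective _))]

end PolynomialEquivAt

section Factors

variable {R σ : Type*} [CommRing R] [IsDomain R]

theorem card_le_degreeOf_of_prod_dvd {j : σ} {G : Multiset (MvPolynomial σ R)}
    {f : MvPolynomial σ R} (hG : ∀ g ∈ G, degreeOf j g ≠ 0) (hGf : G.prod ∣ f) (hf : f ≠ 0) :
    Multiset.card G ≤ degreeOf j f := by
  classical
  have hmap := Polynomial.card_le_natDegree_of_prod_dvd (M := G.map (polynomialEquivAt R j))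
    (by simpa [natDegree_polynomialEquivAt, Nat.pos_iff_ne_zero] using hG)
    (by simpa [← map_multiset_prod] using map_dvd (polynomialEquivAt R j) hGf)
    ((map_ne_zero_iff _ (polynomialEquivAt R j).injective).mpr hf)
  simpa [natDegree_polynomialEquivAt] using hmap

variable [DecidableEq σ]

theorem exists_coeff_polynomialEquivAt_card_support_le {j : σ} {f g : MvPolynomial σ R}
    (hf : f ≠ 0) (hgf : g ∣ f) (hgX : ¬X j ∣ g) (hg : 0 < degreeOf j g) :
    ∃ k, (polynomialEquivAt R j f).coeff k ≠ 0 ∧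
      2 * #((polynomialEquivAt R j f).coeff k).support ≤ #f.support := by
  set q := polynomialEquivAt R j f
  have hq : q ≠ 0 := (map_ne_zero_iff _ (polynomialEquivAt R j).injective).mpr hf
  have hlt : q.natTrailingDegree < q.natDegree :=
    Polynomial.natTrailingDegree_lt_natDegree_of_dvd (map_dvd (polynomialEquivAt R j) hgf) hq
      (by rwa [← polynomialEquivAt_X_self, map_dvd_iff]) (by rwa [natDegree_polynomialEquivAt])
  have hsum : #(q.coeff q.natTrailingDegree).support + #(q.coeff q.natDegree).support ≤
      #f.support := card_support_coeff_polynomialEquivAt_add_le j f hlt.ne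
  rcases le_total #(q.coeff q.natTrailingDegree).support #(q.coeff q.natDegree).support with h | h
  · exact ⟨_, Polynomial.trailingCoeff_nonzero_iff_nonzero.mpr hq, by omega⟩
  · exact ⟨_, Polynomial.leadingCoeff_ne_zero.mpr hq, by omega⟩

end Factors

section Field

variable {F σ : Type*} [Field F]

theorem exists_degreeOf_pos_of_not_isUnit {g : MvPolynomial σ F} (hg0 : g ≠ 0)
    (hg : ¬IsUnit g) : ∃ j, 0 < degreeOf j g := by
  by_contra! h
  have htot : g.totalDegree = 0 := (totalDegree_eq_zero_iff _ g).mpr fun m hm x =>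
    Nat.le_zero.mp ((monomial_le_degreeOf x hm).trans (h x))
  refine hg (isUnit_iff_totalDegree_of_isReduced.mpr
    ⟨isUnit_iff_ne_zero.mpr fun h0 => hg0 ?_, htot⟩)
  rw [totalDegree_eq_zero_iff_eq_C.mp htot, h0, map_zero]

theorem exists_prod_polynomialEquivAt_eq_C [DecidableEq σ] (j : σ)
    {B : Multiset (MvPolynomial σ F)} (hB : ∀ g ∈ B, degreeOf j g = 0)
    (hBunit : ∀ g ∈ B, ¬IsUnit g) (hBX : ∀ g ∈ B, ∀ i, ¬X i ∣ g) :
    ∃ B' : Multiset (MvPolynomial {i // i ≠ j} F), Multiset.card B' = Multiset.card B ∧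
      Polynomial.C B'.prod = polynomialEquivAt F j B.prod ∧
      (∀ g ∈ B', ¬IsUnit g) ∧ ∀ g ∈ B', ∀ i, ¬X i ∣ g := by
  set e := polynomialEquivAt F j
  have hC (g) (hg : g ∈ B) : e g = Polynomial.C ((e g).coeff 0) :=
    Polynomial.eq_C_of_natDegree_eq_zero (by rw [natDegree_polynomialEquivAt, hB g hg])
  refine ⟨B.map fun g => (e g).coeff 0, Multiset.card_map _ _, ?_, ?_, ?_⟩
  · rw [map_multiset_prod, map_multiset_prod, Multiset.map_map]
    exact congrArg _ (Multiset.map_congr rfl fun g hg => (hC g hg).symm)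
  · simp only [Multiset.mem_map]
    rintro _ ⟨g, hg, rfl⟩ hu
    exact hBunit g hg ((isUnit_map_iff e g).mp (hC g hg ▸ hu.map Polynomial.C))
  · simp only [Multiset.mem_map]
    rintro _ ⟨g, hg, rfl⟩ i hi
    refine hBX g hg i ((map_dvd_iff e).mp ?_)
    rw [polynomialEquivAt_X_val, hC g hg]
    exact map_dvd Polynomial.C hi

theorem two_pow_card_le_card_support_pow {d : ℕ} {f : MvPolynomial σ F} (hf : f ≠ 0)
    (hd : ∀ i, degreeOf i f ≤ d) {G : Multiset (MvPolynomial σ F)} (hGunit : ∀ g ∈ G, ¬IsUnit g)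
    (hGX : ∀ g ∈ G, ∀ i, ¬X i ∣ g) (hGf : G.prod ∣ f) :
    2 ^ Multiset.card G ≤ #f.support ^ d := by
  classical
  induction hN : #f.support using Nat.strong_induction_on generalizing σ f G with
  | _ N IH =>
  obtain rfl | ⟨g₀, hg₀⟩ := G.empty_or_exists_mem
  · simpa using Nat.one_le_pow d N (hN ▸ card_pos.mpr (support_nonempty.mpr hf))
  have hg₀f : g₀ ∣ f := (Multiset.dvd_prod hg₀).trans hGf
  obtain ⟨j, hj⟩ := exists_degreeOf_pos_of_not_isUnit (ne_zero_of_dvd_ne_zero hf hg₀f)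
    (hGunit g₀ hg₀)
  obtain ⟨k, hc0, hcf⟩ :=
    exists_coeff_polynomialEquivAt_card_support_le hf hg₀f (hGX g₀ hg₀ j) hj
  set c := (polynomialEquivAt F j f).coeff k
  have hfilter (p : MvPolynomial σ F → Prop) [DecidablePred p] : (G.filter p).prod ∣ f :=
    (Multiset.prod_dvd_prod_of_le (Multiset.filter_le _ _)).trans hGf
  have hA : Multiset.card (G.filter (degreeOf j · ≠ 0)) ≤ d :=
    (card_le_degreeOf_of_prod_dvd (fun g hg => (Multiset.mem_filter.mp hg).2) (hfilter _)
      hf).trans (hd j)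
  obtain ⟨B', hB'card, hB'prod, hB'unit, hB'X⟩ := exists_prod_polynomialEquivAt_eq_C j
    (B := G.filter (degreeOf j · = 0)) (fun g hg => (Multiset.mem_filter.mp hg).2)
    (fun g hg => hGunit g (Multiset.mem_of_mem_filter hg))
    (fun g hg => hGX g (Multiset.mem_of_mem_filter hg))
  have hB'c : B'.prod ∣ c :=
    (Polynomial.C_dvd_iff_dvd_coeff _ _).mp (hB'prod ▸ map_dvd _ (hfilter _)) k
  have hcN : #c.support < N := by
    have := card_pos.mpr (support_nonempty.mpr hc0)
    omega
  have hB' : 2 ^ Multiset.card B' ≤ #c.support ^ d := IH _ hcN hc0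
    (fun i => (degreeOf_coeff_polynomialEquivAt_le j f i k).trans (hd i)) hB'unit hB'X hB'c rfl
  calc 2 ^ Multiset.card G
      = 2 ^ Multiset.card B' * 2 ^ Multiset.card (G.filter (degreeOf j · ≠ 0)) := by
        rw [hB'card, ← pow_add, ← Multiset.card_add, Multiset.filter_add_not]
    _ ≤ #c.support ^ d * 2 ^ d := Nat.mul_le_mul hB' (Nat.pow_le_pow_right two_pos hA)
    _ = (2 * #c.support) ^ d := by rw [mul_pow, mul_comm]
    _ ≤ N ^ d := Nat.pow_le_pow_left (hN ▸ hcf) d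

end Field

end MvPolynomial

namespace UniqueFactorizationMonoid

theorem card_le_two_pow_card_filter_normalizedFactors {α : Type*} [CommMonoidWithZero α]
    [NormalizationMonoid α] [UniqueFactorizationMonoid α] {f : α} (hf : f ≠ 0) (P : α → Prop)
    [DecidablePred P] {D : Finset α} (hDf : ∀ g ∈ D, g ∣ f)
    (hDP : ∀ g ∈ D, ∀ p ∈ normalizedFactors g, P p)
    (hD : ∀ g ∈ D, ∀ h ∈ D, g ≠ h → ¬Associated g h) :
    #D ≤ 2 ^ Multiset.card ((normalizedFactors f).filter P) := by
  classical
  have hD0 {g} (hg : g ∈ D) : g ≠ 0 := fun h0 => hf (zero_dvd_iff.mp (h0 ▸ hDf g hg))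
  calc #D ≤ #((normalizedFactors f).filter P).powerset.toFinset := by
        refine card_le_card_of_injOn normalizedFactors (fun g hg => ?_) fun g hg h hh hgh => ?_
        · simpa [Multiset.le_filter] using
            ⟨(dvd_iff_normalizedFactors_le_normalizedFactors (hD0 hg) hf).mp (hDf g hg), hDP g hg⟩
        · by_contra hne
          exact hD g hg h hh hne
            ((associated_iff_normalizedFactors_eq_normalizedFactors (hD0 hg) (hD0 hh)).mpr hgh)
    _ ≤ 2 ^ Multiset.card ((normalizedFactors f).filter P) := by
        simpa using Multiset.toFinset_card_le ((normalizedFactors f).filter P).powerset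

end UniqueFactorizationMonoid

theorem stmt11_general {F : Type*} [Field F] {n s d : ℕ} (f : MvPolynomial (Fin n) F)
    (hf : f ≠ 0) (hs : f.support.card ≤ s) (hd : ∀ i, MvPolynomial.degreeOf i f ≤ d)
    (D : Finset (MvPolynomial (Fin n) F))
    (hDdvd : ∀ g ∈ D, g ∣ f)
    (hDmon : ∀ g ∈ D, ∀ i, ¬ (MvPolynomial.X i ∣ g))
    (hDassoc : ∀ g ∈ D, ∀ h ∈ D, g ≠ h → ¬ Associated g h) :
    D.card ≤ s ^ d := by
  classical
  let _ : NormalizationMonoid (MvPolynomial (Fin n) F) :=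
    UniqueFactorizationMonoid.strongNormalizationMonoid.toNormalizationMonoid
  let P (p : MvPolynomial (Fin n) F) : Prop := ∀ i, ¬X i ∣ p
  calc D.card ≤ 2 ^ Multiset.card ((normalizedFactors f).filter P) :=
        card_le_two_pow_card_filter_normalizedFactors hf P hDdvd
          (fun g hg p hp i hXp => hDmon g hg i (hXp.trans (dvd_of_mem_normalizedFactors hp)))
          hDassoc
    _ ≤ f.support.card ^ d :=
        two_pow_card_le_card_support_pow hf hd
          (fun p hp =>
            (irreducible_of_normalized_factor p (Multiset.mem_of_mem_filter hp)).not_isUnit)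
          (fun p hp => (Multiset.mem_filter.mp hp).2)
          ((Multiset.prod_dvd_prod_of_le (Multiset.filter_le _ _)).trans
            (prod_normalizedFactors hf).dvd)
    _ ≤ s ^ d := Nat.pow_le_pow_left hs d

/-- If `f` is a nonzero `s`-sparse polynomial of individual degree at most `d`, not divisible
by any variable, then the number of pairwise non-associate divisors of `f` that are not
divisible by any variable is at most `s ^ d`. -/
theorem stmt11 {F : Type*} [Field F] {n s d : ℕ} (f : MvPolynomial (Fin n) F)
    (hf : f ≠ 0) (hs : f.support.card ≤ s) (hd : ∀ i, MvPolynomial.degreeOf i f ≤ d)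
    (hmon : ∀ i, ¬ (MvPolynomial.X i ∣ f))
    (D : Finset (MvPolynomial (Fin n) F))
    (hDdvd : ∀ g ∈ D, g ∣ f)
    (hDmon : ∀ g ∈ D, ∀ i, ¬ (MvPolynomial.X i ∣ g))
    (hDassoc : ∀ g ∈ D, ∀ h ∈ D, g ≠ h → ¬ Associated g h) :
    D.card ≤ s ^ d :=
  stmt11_general f hf hs hd D hDdvd hDmon hDassoc
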